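/- Composite pre-change coverage guarantee: suppose the pre-change class 𝒫₀ and the change detection stopping time τ satisfy Assumption 1 with least favorable element F₀* ∈ 𝒫₀, and that P_{F₀,∞}(τ ≥ T) > 0 for all F₀ ∈ 𝒫₀. Then for every α ∈ (0,1), every T ∈ ℕ, and every post-change class 𝒫₁, the confidence set C := {t ∈ ℕ : t ≤ τ, M_t < 2/(α r_t*)}, constructed with any family (r_t*) of almost surely strictly positive random variables, each independent of the observed data, satisfying E[r_t*] = P_{F₀*,∞}(τ ≥ t), satisfies P_{F₀,T,F₁}(T ∈ C | τ ≥ T) ≥ 1 − α for all F₀ ∈ 𝒫₀ and F₁ ∈ 𝒫₁. -/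

import Mathlib

/-!
The event `{τ ≥ T}` is determined by `X₁, …, X_{T-1}`, on which the change law and `P_{F₀,∞}`
agree, so Assumption 1 gives `E[r_T*] = P_{F₀*,∞}(τ ≥ T) ≤ P_{F₀,T,F₁}(τ ≥ T)`.
If `M_T ≥ c` with `c > 1`, then either the forward e-process `R⁽ᵀ⁾`, built from the i.i.d. `F₁`
observations `X_T, X_{T+1}, …`, or the backward e-process `S⁽ᵀ⁾`, built from the i.i.d. `F₀`
observations `X₁, …, X_{T-1}`, crosses `c`. Optional stopping at the crossing time (Ville's
inequality) bounds each crossing probability by `1/c`. For `c = 2/(α r_T*)`, integrating over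
the independent `r_T*` bounds `P(τ ≥ T, T ∉ C)` by `α E[r_T*] ≤ α P(τ ≥ T)`.
-/

open MeasureTheory ProbabilityTheory Filter Set
open scoped ENNReal NNReal

namespace SeqChange

variable {𝒳 : Type*} [MeasurableSpace 𝒳]

/-- The σ-algebra on the sequence space generated by the coordinates with indices in `s`. -/
def coordSigma (𝒳 : Type*) [MeasurableSpace 𝒳] (s : Set ℕ) : MeasurableSpace (ℕ → 𝒳) :=
  ⨆ i ∈ s, MeasurableSpace.comap (fun ω : ℕ → 𝒳 => ω i) inferInstance

/-- The natural filtration `σ(X₁, …, Xₙ)` of the observation sequence (observations are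
indexed from 1; coordinate 0 is unused). -/
def natFilt (𝒳 : Type*) [MeasurableSpace 𝒳] (n : ℕ) : MeasurableSpace (ℕ → 𝒳) :=
  coordSigma 𝒳 {i | 1 ≤ i ∧ i ≤ n}

/-- `τ` is a stopping time with respect to the natural filtration of the observation
sequence, taking values in `ℕ ∪ {∞}`. -/
def IsStoppingTimeSeq (τ : (ℕ → 𝒳) → ℕ∞) : Prop :=
  ∀ n : ℕ, MeasurableSet[natFilt 𝒳 n] {ω | τ ω ≤ (n : ℕ∞)}

/-- `P` is the joint law of a sequence of independent observations `X₁, X₂, …` with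
`Xₙ ~ ν n` for every `n ≥ 1`: a probability measure whose finite-dimensional
distributions on the coordinates with indices `≥ 1` are the corresponding products. -/
def IsProductLaw (P : Measure (ℕ → 𝒳)) (ν : ℕ → Measure 𝒳) : Prop :=
  IsProbabilityMeasure P ∧
    ∀ s : Finset ℕ, (∀ i ∈ s, 1 ≤ i) → ∀ A : ℕ → Set 𝒳, (∀ i, MeasurableSet (A i)) →
      P {ω | ∀ i ∈ s, ω i ∈ A i} = ∏ i ∈ s, ν i (A i)

/-- `P` is the law `P_{F₀,T,F₁}`: independent coordinates, `Xₙ ~ F₀` for `n < T` and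
`Xₙ ~ F₁` for `n ≥ T`. -/
def IsChangeLaw (P : Measure (ℕ → 𝒳)) (F₀ F₁ : Measure 𝒳) (T : ℕ) : Prop :=
  IsProductLaw P (fun n => if n < T then F₀ else F₁)

/-- `P` is the law `P_{F₀,∞}`: all coordinates i.i.d. `F₀` (no change ever occurs). -/
def IsNoChangeLaw (P : Measure (ℕ → 𝒳)) (F₀ : Measure 𝒳) : Prop :=
  IsProductLaw P (fun _ => F₀)

/-- Under `Q`, the coordinates with indices in `I` are i.i.d. with law `ν`. -/
def IsIIDOn (Q : Measure (ℕ → 𝒳)) (ν : Measure 𝒳) (I : Set ℕ) : Prop :=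
  IsProbabilityMeasure Q ∧
    ∀ s : Finset ℕ, (↑s ⊆ I) → ∀ A : ℕ → Set 𝒳, (∀ i, MeasurableSet (A i)) →
      Q {ω | ∀ i ∈ s, ω i ∈ A i} = ∏ i ∈ s, ν (A i)

/-- Forward filtration `σ(X_t, …, X_n)`. -/
def fwdFilt (𝒳 : Type*) [MeasurableSpace 𝒳] (t n : ℕ) : MeasurableSpace (ℕ → 𝒳) :=
  coordSigma 𝒳 {i | t ≤ i ∧ i ≤ n}

/-- Backward filtration `σ(X_n, …, X_{t-1})`. -/
def bwdFilt (𝒳 : Type*) [MeasurableSpace 𝒳] (t n : ℕ) : MeasurableSpace (ℕ → 𝒳) :=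
  coordSigma 𝒳 {i | n ≤ i ∧ i < t}

/-- A forward `t`-delay e-process under the class `𝒫₁`: a nonnegative process
`(R n)_{n ≥ t}` adapted to the forward filtration `σ(X_t, …, X_n)` such that for every
`F₁ ∈ 𝒫₁`, every law `Q` under which `X_t, X_{t+1}, …` are i.i.d. `F₁`, and every
stopping time `κ ≥ t` of the forward filtration, `E_Q[R_κ] ≤ 1`. -/
def IsForwardEProcess (𝒫₁ : Set (Measure 𝒳)) (t : ℕ) (R : ℕ → (ℕ → 𝒳) → ℝ≥0∞) : Prop :=
  (∀ n, t ≤ n → Measurable[fwdFilt 𝒳 t n] (R n)) ∧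
    ∀ F₁ ∈ 𝒫₁, ∀ Q : Measure (ℕ → 𝒳), IsIIDOn Q F₁ {i | t ≤ i} →
      ∀ κ : (ℕ → 𝒳) → ℕ, (∀ ω, t ≤ κ ω) →
        (∀ n, MeasurableSet[fwdFilt 𝒳 t n] {ω | κ ω ≤ n}) →
        ∫⁻ ω, R (κ ω) ω ∂Q ≤ 1

/-- A backward `t`-delay e-process under the class `𝒫₀`: a nonnegative process
`(S n)_{1 ≤ n < t}` adapted to the backward filtration `σ(X_n, …, X_{t-1})` such that for
every `F₀ ∈ 𝒫₀`, every law `Q` under which `X₁, …, X_{t-1}` are i.i.d. `F₀`, and every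
stopping time `κ` of the backward filtration with `1 ≤ κ < t`, `E_Q[S_κ] ≤ 1`. -/
def IsBackwardEProcess (𝒫₀ : Set (Measure 𝒳)) (t : ℕ) (S : ℕ → (ℕ → 𝒳) → ℝ≥0∞) : Prop :=
  (∀ n, 1 ≤ n → n < t → Measurable[bwdFilt 𝒳 t n] (S n)) ∧
    ∀ F₀ ∈ 𝒫₀, ∀ Q : Measure (ℕ → 𝒳), IsIIDOn Q F₀ {i | 1 ≤ i ∧ i < t} →
      ∀ κ : (ℕ → 𝒳) → ℕ, (∀ ω, 1 ≤ κ ω ∧ κ ω < t) →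
        (∀ n, MeasurableSet[bwdFilt 𝒳 t n] {ω | n ≤ κ ω}) →
        ∫⁻ ω, S (κ ω) ω ∂Q ≤ 1

/-- The localization statistic `M_t` built from the estimator `T̂`, forward e-processes `R`
and backward e-processes `S`: `M_t = R^{(t)}_{T̂ - 1}` if `t < T̂ ≤ τ < ∞`, `M_t = 1` if
`t = T̂ ≤ τ < ∞`, `M_t = S^{(t)}_{T̂}` if `T̂ < t ≤ τ < ∞`, and `M_t = -∞` if `t > τ` or
`τ = ∞`. -/
noncomputable def eStat (τ : (ℕ → 𝒳) → ℕ∞) (That : (ℕ → 𝒳) → ℕ)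
    (R S : ℕ → ℕ → (ℕ → 𝒳) → ℝ≥0∞) (t : ℕ) (ω : ℕ → 𝒳) : EReal :=
  if (t : ℕ∞) ≤ τ ω ∧ τ ω ≠ ⊤ then
    if t < That ω then ((R t (That ω - 1) ω : ℝ≥0∞) : EReal)
    else if t = That ω then 1
    else ((S t (That ω) ω : ℝ≥0∞) : EReal)
  else ⊥

end SeqChange

lemma mul_measure_le_lintegral_of_le_on {Ω : Type*} [MeasurableSpace Ω] {μ : Measure Ω}
    {E : Set Ω} (hE : MeasurableSet E) {f : Ω → ℝ≥0∞} {c : ℝ≥0∞} (hf : ∀ ω ∈ E, c ≤ f ω) :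
    c * μ E ≤ ∫⁻ ω, f ω ∂μ :=
  calc c * μ E = ∫⁻ _ in E, c ∂μ := (setLIntegral_const E c).symm
    _ ≤ ∫⁻ ω in E, f ω ∂μ := setLIntegral_mono' hE hf
    _ ≤ ∫⁻ ω, f ω ∂μ := setLIntegral_le_lintegral E f

lemma measurableSet_hittingBtwn_le {Ω β : Type*} {m : MeasurableSpace Ω} {u : ℕ → Ω → β}
    {s : Set β} {a b n : ℕ} (hu : ∀ j ∈ Icc a n, j < b → MeasurableSet[m] (u j ⁻¹' s)) :
    MeasurableSet[m] {ω | hittingBtwn u s a b ω ≤ n} := by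
  rcases le_or_gt b n with hbn | hnb
  · simp [fun ω => (hittingBtwn_le (u := u) (s := s) (n := a) ω).trans hbn]
  · have : {ω | hittingBtwn u s a b ω ≤ n} = ⋃ j ∈ Icc a n, u j ⁻¹' s := by
      ext ω
      simp [hittingBtwn_le_iff_of_lt _ hnb]
    rw [this]
    exact .biUnion (to_countable _) fun j hj => hu j hj (hj.2.trans_lt hnb)

lemma measurableSet_exists_mem {Ω β : Type*} [MeasurableSpace Ω] {u : ℕ → Ω → β}
    {s : Set β} {I : Set ℕ} (hu : ∀ n ∈ I, MeasurableSet (u n ⁻¹' s)) :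
    MeasurableSet {ω | ∃ n ∈ I, u n ω ∈ s} := by
  have : {ω | ∃ n ∈ I, u n ω ∈ s} = ⋃ n ∈ I, u n ⁻¹' s := by ext; simp
  exact this ▸ .biUnion (to_countable I) hu

lemma prod_measure_le_ofReal_mul_integral {Ω Ω' : Type*} [MeasurableSpace Ω] [MeasurableSpace Ω']
    {P : Measure Ω} [SFinite P] {μ : Measure Ω'} [SFinite μ] {E : ℝ≥0∞ → Set Ω}
    (hE : ∀ c, P (E c) ≤ 2 * c⁻¹) {α : ℝ} (hα : 0 < α) {r : Ω' → ℝ}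
    (hr : ∀ᵐ a ∂μ, 0 < r a) (hint : Integrable r μ)
    (hmeas : MeasurableSet {q : Ω × Ω' | q.1 ∈ E (ENNReal.ofReal (2 / (α * r q.2)))}) :
    (P.prod μ) {q | q.1 ∈ E (ENNReal.ofReal (2 / (α * r q.2)))} ≤
      ENNReal.ofReal (α * ∫ a, r a ∂μ) := by
  have hthreshold : ∀ a, 0 < r a →
      2 * (ENNReal.ofReal (2 / (α * r a)))⁻¹ = ENNReal.ofReal (α * r a) := by
    intro a ha
    rw [← ENNReal.ofReal_inv_of_pos (by positivity), inv_div, ← ENNReal.ofReal_ofNat,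
      ← ENNReal.ofReal_mul (by norm_num)]
    congr 1
    field_simp
  rw [Measure.prod_apply_symm hmeas, ← integral_const_mul,
    ofReal_integral_eq_lintegral_ofReal (hint.const_mul α) (hr.mono fun a ha => by positivity)]
  exact lintegral_mono_ae <| hr.mono fun a ha => (hE _).trans_eq (hthreshold a ha)

lemma one_sub_le_cond_of_measure_inter_compl_le {Ω : Type*} [MeasurableSpace Ω]
    {μ : Measure Ω} {A B : Set Ω} (hB : MeasurableSet B) (hB0 : μ B ≠ 0) (hBtop : μ B ≠ ⊤)
    {ε : ℝ≥0∞} (h : μ (B ∩ Aᶜ) ≤ ε * μ B) : 1 - ε ≤ μ[A|B] := by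
  have := cond_isProbabilityMeasure_of_finite hB0 hBtop
  have hcompl : μ[Aᶜ|B] ≤ ε := by
    rw [cond_apply hB, ENNReal.inv_mul_le_iff hB0 hBtop, mul_comm]
    exact h
  refine tsub_le_iff_right.2 ?_
  calc 1 = μ[A ∪ Aᶜ|B] := by rw [union_compl_self, measure_univ]
    _ ≤ μ[A|B] + μ[Aᶜ|B] := measure_union_le _ _
    _ ≤ μ[A|B] + ε := add_le_add_right hcompl _

namespace SeqChange

variable {𝒳 : Type*}

/-- The alternative `c ≤ 1` accounts for the value `M_t = 1` at `t = T̂`. -/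
def crossingSet (R S : ℕ → (ℕ → 𝒳) → ℝ≥0∞) (t : ℕ) (c : ℝ≥0∞) : Set (ℕ → 𝒳) :=
  {ω | c ≤ 1 ∨ (∃ n, t ≤ n ∧ c ≤ R n ω) ∨ ∃ n, 1 ≤ n ∧ n < t ∧ c ≤ S n ω}

lemma mem_crossingSet_of_le_eStat {τ : (ℕ → 𝒳) → ℕ∞} {That : (ℕ → 𝒳) → ℕ} {ω : ℕ → 𝒳}
    (hThat : τ ω ≠ ⊤ → 1 ≤ That ω) {R S : ℕ → ℕ → (ℕ → 𝒳) → ℝ≥0∞} {t : ℕ} {x : ℝ} (hx : (x : EReal) ≤ eStat τ That R S t ω) :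
    ω ∈ crossingSet (R t) (S t) t (ENNReal.ofReal x) := by
  have hle : ∀ y : ℝ≥0∞, (x : EReal) ≤ y → ENNReal.ofReal x ≤ y := fun y h => by
    rw [← EReal.coe_ennreal_le_coe_ennreal_iff, EReal.coe_ennreal_ofReal]
    exact max_le h (EReal.coe_ennreal_nonneg y)
  unfold eStat at hx
  split_ifs at hx with hτ h1 h2
  · exact .inr (.inl ⟨That ω - 1, by omega, hle _ hx⟩)
  · exact .inl (hle 1 (by simpa using hx))
  · exact .inr (.inr ⟨That ω, hThat hτ.2, by omega, hle _ hx⟩)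
  · exact absurd hx (not_le.2 (EReal.bot_lt_coe x))

variable [MeasurableSpace 𝒳]

lemma coordSigma_le (I : Set ℕ) : coordSigma 𝒳 I ≤ (inferInstance : MeasurableSpace (ℕ → 𝒳)) :=
  iSup₂_le fun i _ => (measurable_pi_apply i).comap_le

lemma coordSigma_mono {I J : Set ℕ} (h : I ⊆ J) : coordSigma 𝒳 I ≤ coordSigma 𝒳 J :=
  biSup_mono fun _ hi => h hi

lemma IsIIDOn.measure_eq {P Q : Measure (ℕ → 𝒳)} {ν : Measure 𝒳} {I : Set ℕ}
    (hP : IsIIDOn P ν I) (hQ : IsIIDOn Q ν I) {U : Set (ℕ → 𝒳)}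
    (hU : MeasurableSet[coordSigma 𝒳 I] U) : P U = Q U := by
  have hle := coordSigma_le (𝒳 := 𝒳) I
  have := hP.1
  suffices P.trim hle = Q.trim hle by
    rw [← trim_measurableSet_eq hle hU, this, trim_measurableSet_eq hle hU]
  refine ext_of_generate_finite _ (generateFrom_piiUnionInter_measurableSet _ I).symm
    (isPiSystem_piiUnionInter _ (fun _ => @MeasurableSpace.isPiSystem_measurableSet _ (_)) I)
    ?_ (by simp [trim_measurableSet_eq hle, hP.1.measure_univ, hQ.1.measure_univ])
  rintro _ ⟨s, hsI, f, hf, rfl⟩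
  choose! A hA hAf using fun i hi => MeasurableSpace.measurableSet_comap.1 (hf i hi)
  set A' : ℕ → Set 𝒳 := fun i => if i ∈ s then A i else univ
  have hA' : ∀ i, MeasurableSet (A' i) := fun i => by
    by_cases hi : i ∈ s
    · simpa [A', hi] using hA i hi
    · simp [A', hi]
  have hcyl : (⋂ i ∈ s, f i) = {ω | ∀ i ∈ s, ω i ∈ A' i} := by
    ext ω
    simp +contextual [A', ← hAf]
  have hmeas : MeasurableSet[coordSigma 𝒳 I] (⋂ i ∈ s, f i) :=
    measurableSet_iSup_of_mem_piiUnionInter _ I _ ⟨s, hsI, f, hf, rfl⟩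
  rw [trim_measurableSet_eq hle hmeas, trim_measurableSet_eq hle hmeas, hcyl,
    hP.2 s hsI _ hA', hQ.2 s hsI _ hA']

lemma IsProductLaw.isIIDOn {P : Measure (ℕ → 𝒳)} {ν : ℕ → Measure 𝒳} {μ : Measure 𝒳}
    {I : Set ℕ} (hP : IsProductLaw P ν) (hI : ∀ i ∈ I, 1 ≤ i ∧ ν i = μ) : IsIIDOn P μ I :=
  ⟨hP.1, fun s hs A hA => (hP.2 s (fun i hi => (hI i (hs hi)).1) A hA).trans <|
    Finset.prod_congr rfl fun i hi => by rw [(hI i (hs hi)).2]⟩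

lemma IsChangeLaw.isIIDOn_preChange {P : Measure (ℕ → 𝒳)} {F₀ F₁ : Measure 𝒳} {T : ℕ}
    (hP : IsChangeLaw P F₀ F₁ T) : IsIIDOn P F₀ {i | 1 ≤ i ∧ i < T} :=
  IsProductLaw.isIIDOn hP fun _ hi => ⟨hi.1, if_pos hi.2⟩

lemma IsChangeLaw.isIIDOn_postChange {P : Measure (ℕ → 𝒳)} {F₀ F₁ : Measure 𝒳} {T : ℕ}
    (hP : IsChangeLaw P F₀ F₁ T) (hT : 1 ≤ T) : IsIIDOn P F₁ {i | T ≤ i} :=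
  IsProductLaw.isIIDOn hP fun _ hi => ⟨hT.trans hi, if_neg (not_lt.2 hi)⟩

lemma IsNoChangeLaw.isIIDOn {P : Measure (ℕ → 𝒳)} {F₀ : Measure 𝒳} {I : Set ℕ}
    (hP : IsNoChangeLaw P F₀) (hI : ∀ i ∈ I, 1 ≤ i) : IsIIDOn P F₀ I :=
  IsProductLaw.isIIDOn hP fun i hi => ⟨hI i hi, rfl⟩

lemma IsStoppingTimeSeq.measurableSet_ge {τ : (ℕ → 𝒳) → ℕ∞} (hτ : IsStoppingTimeSeq τ)
    {T : ℕ} (hT : 1 ≤ T) :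
    MeasurableSet[coordSigma 𝒳 {i | 1 ≤ i ∧ i < T}] {ω | (T : ℕ∞) ≤ τ ω} := by
  have hpre : {ω | (T : ℕ∞) ≤ τ ω} = {ω | τ ω ≤ ((T - 1 : ℕ) : ℕ∞)}ᶜ := by
    ext ω
    rw [mem_ofPred_eq, mem_compl_iff, mem_ofPred_eq, not_le, ← ENat.add_one_le_iff (by simp)]
    norm_cast
    rw [Nat.sub_add_cancel hT]
  rw [hpre]
  have hsub : {i | 1 ≤ i ∧ i ≤ T - 1} ⊆ {i | 1 ≤ i ∧ i < T} := fun i hi => ⟨hi.1, by grind⟩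
  exact (coordSigma_mono hsub _ (hτ (T - 1))).compl

lemma fwdFilt_mono {t m n : ℕ} (h : m ≤ n) : fwdFilt 𝒳 t m ≤ fwdFilt 𝒳 t n :=
  coordSigma_mono fun _ hi => ⟨hi.1, hi.2.trans h⟩

lemma bwdFilt_anti {t m n : ℕ} (h : m ≤ n) : bwdFilt 𝒳 t n ≤ bwdFilt 𝒳 t m :=
  coordSigma_mono fun _ hi => ⟨h.trans hi.1, hi.2⟩

section EProcess

variable {𝒫₀ 𝒫₁ : Set (Measure 𝒳)} {t : ℕ} {R S : ℕ → (ℕ → 𝒳) → ℝ≥0∞}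

lemma IsForwardEProcess.measurable (hR : IsForwardEProcess 𝒫₁ t R) {n : ℕ} (hn : t ≤ n) :
    Measurable (R n) :=
  (hR.1 n hn).mono (coordSigma_le _) le_rfl

lemma IsBackwardEProcess.measurable (hS : IsBackwardEProcess 𝒫₀ t S) {n : ℕ} (h1 : 1 ≤ n)
    (hn : n < t) : Measurable (S n) :=
  (hS.1 n h1 hn).mono (coordSigma_le _) le_rfl

theorem IsForwardEProcess.ville_ineq (hR : IsForwardEProcess 𝒫₁ t R) {F₁ : Measure 𝒳}
    (hF₁ : F₁ ∈ 𝒫₁) {Q : Measure (ℕ → 𝒳)} (hQ : IsIIDOn Q F₁ {i | t ≤ i}) (c : ℝ≥0∞) :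
    Q {ω | ∃ n, t ≤ n ∧ c ≤ R n ω} ≤ c⁻¹ := by
  rw [ENNReal.le_inv_iff_mul_le, mul_comm]
  -- the hitting time of `[c, ∞]` is a bounded stopping time only on a finite horizon
  have hwindow : ∀ N, c * Q {ω | ∃ n ∈ Icc t (t + N), R n ω ∈ Ici c} ≤ 1 := by
    intro N
    set κ := hittingBtwn R (Ici c) t (t + N)
    have hκ : ∀ n, MeasurableSet[fwdFilt 𝒳 t n] {ω | κ ω ≤ n} := fun n =>
      measurableSet_hittingBtwn_le fun j hj _ => fwdFilt_mono hj.2 _ (hR.1 j hj.1 measurableSet_Ici)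
    calc c * Q {ω | ∃ n ∈ Icc t (t + N), R n ω ∈ Ici c} ≤ ∫⁻ ω, R (κ ω) ω ∂Q :=
          mul_measure_le_lintegral_of_le_on
            (measurableSet_exists_mem fun n hn => hR.measurable hn.1 measurableSet_Ici)
            fun ω hω => hittingBtwn_mem_set hω
      _ ≤ 1 := hR.2 F₁ hF₁ Q hQ κ (fun ω => le_hittingBtwn (Nat.le_add_right t N) ω) hκ
  have hunion : {ω | ∃ n, t ≤ n ∧ c ≤ R n ω} = ⋃ N, {ω | ∃ n ∈ Icc t (t + N), R n ω ∈ Ici c} := by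
    ext ω
    simp only [mem_ofPred_eq, mem_iUnion, mem_Icc, mem_Ici]
    exact ⟨fun ⟨n, hn, hc⟩ => ⟨n, n, ⟨hn, by omega⟩, hc⟩, fun ⟨_, n, hn, hc⟩ => ⟨n, hn.1, hc⟩⟩
  have hmono : Monotone fun N => {ω | ∃ n ∈ Icc t (t + N), R n ω ∈ Ici c} :=
    fun N M hNM ω ⟨n, hn, hc⟩ => ⟨n, ⟨hn.1, hn.2.trans (by omega)⟩, hc⟩
  rw [hunion, hmono.measure_iUnion, ENNReal.mul_iSup]
  exact iSup_le hwindow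

theorem IsBackwardEProcess.ville_ineq (hS : IsBackwardEProcess 𝒫₀ t S) {F₀ : Measure 𝒳}
    (hF₀ : F₀ ∈ 𝒫₀) {Q : Measure (ℕ → 𝒳)} (hQ : IsIIDOn Q F₀ {i | 1 ≤ i ∧ i < t}) (c : ℝ≥0∞) :
    Q {ω | ∃ n, 1 ≤ n ∧ n < t ∧ c ≤ S n ω} ≤ c⁻¹ := by
  rcases lt_or_ge t 2 with ht | ht
  · have : {ω | ∃ n, 1 ≤ n ∧ n < t ∧ c ≤ S n ω} = ∅ := by
      ext
      simp only [mem_ofPred_eq, mem_empty_iff_false, iff_false]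
      omega
    simp [this]
  rw [ENNReal.le_inv_iff_mul_le, mul_comm]
  -- the last crossing before `t` is the first crossing of the time-reversed process
  set u : ℕ → (ℕ → 𝒳) → ℝ≥0∞ := fun k => S (t - k)
  set h := hittingBtwn u (Ici c) 1 (t - 1)
  have hh : ∀ ω, 1 ≤ h ω ∧ h ω ≤ t - 1 := hittingBtwn_mem_Icc (by omega)
  have hreverse :
      {ω | ∃ n, 1 ≤ n ∧ n < t ∧ c ≤ S n ω} = {ω | ∃ k ∈ Icc 1 (t - 1), u k ω ∈ Ici c} := by
    ext ω
    constructor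
    · rintro ⟨n, h1, h2, hc⟩
      exact ⟨t - n, ⟨by omega, by omega⟩, by simpa [u, Nat.sub_sub_self h2.le] using hc⟩
    · rintro ⟨k, ⟨hk1, hk2⟩, hc⟩
      exact ⟨t - k, by omega, by omega, hc⟩
  have hκ : ∀ n, MeasurableSet[bwdFilt 𝒳 t n] {ω | n ≤ t - h ω} := by
    intro n
    have : {ω | n ≤ t - h ω} = {ω | h ω ≤ t - n} := by
      ext ω
      have := hh ω
      simp only [mem_ofPred_eq]
      omega
    rw [this]
    exact measurableSet_hittingBtwn_le fun j ⟨hj1, hj2⟩ hjt =>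
      bwdFilt_anti (show n ≤ t - j by omega) _ (hS.1 _ (by omega) (by omega) measurableSet_Ici)
  rw [hreverse]
  calc c * Q {ω | ∃ k ∈ Icc 1 (t - 1), u k ω ∈ Ici c} ≤ ∫⁻ ω, S (t - h ω) ω ∂Q :=
        mul_measure_le_lintegral_of_le_on
          (measurableSet_exists_mem fun k hk =>
            hS.measurable (by grind) (by grind) measurableSet_Ici)
          fun ω hω => hittingBtwn_mem_set hω
    _ ≤ 1 := hS.2 F₀ hF₀ Q hQ (fun ω => t - h ω) (fun ω => by have := hh ω; omega) hκ

end EProcess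

theorem IsChangeLaw.measure_crossingSet_le {𝒫₀ 𝒫₁ : Set (Measure 𝒳)} {t : ℕ} (ht : 1 ≤ t)
    {R S : ℕ → (ℕ → 𝒳) → ℝ≥0∞} (hR : IsForwardEProcess 𝒫₁ t R)
    (hS : IsBackwardEProcess 𝒫₀ t S) {F₀ F₁ : Measure 𝒳} (hF₀ : F₀ ∈ 𝒫₀) (hF₁ : F₁ ∈ 𝒫₁)
    {P : Measure (ℕ → 𝒳)} (hP : IsChangeLaw P F₀ F₁ t) (c : ℝ≥0∞) :
    P (crossingSet R S t c) ≤ 2 * c⁻¹ := by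
  have := hP.1
  rcases le_or_gt c 1 with hc | hc
  · calc P (crossingSet R S t c) ≤ 1 := prob_le_one
      _ ≤ 2 * c⁻¹ := le_mul_of_one_le_of_le one_le_two (ENNReal.one_le_inv.2 hc)
  have hsub : crossingSet R S t c ⊆
      {ω | ∃ n, t ≤ n ∧ c ≤ R n ω} ∪ {ω | ∃ n, 1 ≤ n ∧ n < t ∧ c ≤ S n ω} := by
    rintro ω (hc1 | hω | hω)
    exacts [absurd hc1 hc.not_ge, .inl hω, .inr hω]
  calc P (crossingSet R S t c)
      ≤ P {ω | ∃ n, t ≤ n ∧ c ≤ R n ω} + P {ω | ∃ n, 1 ≤ n ∧ n < t ∧ c ≤ S n ω} :=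
        (measure_mono hsub).trans (measure_union_le _ _)
    _ ≤ c⁻¹ + c⁻¹ := add_le_add (hR.ville_ineq hF₁ (hP.isIIDOn_postChange ht) c)
        (hS.ville_ineq hF₀ hP.isIIDOn_preChange c)
    _ = 2 * c⁻¹ := (two_mul _).symm

lemma measurableSet_setOf_mem_crossingSet {𝒫₀ 𝒫₁ : Set (Measure 𝒳)} {t : ℕ}
    {R S : ℕ → (ℕ → 𝒳) → ℝ≥0∞} (hR : IsForwardEProcess 𝒫₁ t R)
    (hS : IsBackwardEProcess 𝒫₀ t S) {Ω : Type*} [MeasurableSpace Ω] {f : Ω → ℝ≥0∞}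
    (hf : Measurable f) :
    MeasurableSet {q : (ℕ → 𝒳) × Ω | q.1 ∈ crossingSet R S t (f q.2)} := by
  have hf' : Measurable fun q : (ℕ → 𝒳) × Ω => f q.2 := hf.comp measurable_snd
  refine measurableSet_setOfPred.2 <| (measurableSet_le hf' measurable_const).mem.or <|
    (Measurable.exists fun n => ?_).or (Measurable.exists fun n => ?_)
  · by_cases hn : t ≤ n
    · simpa [hn] using (measurableSet_le hf' ((hR.measurable hn).comp measurable_fst)).mem
    · simp [hn]
  · by_cases hn : 1 ≤ n ∧ n < t
    · simpa [hn] using (measurableSet_le hf' ((hS.measurable hn.1 hn.2).comp measurable_fst)).mem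
    · simp only [← and_assoc, hn, false_and, measurable_const]

theorem composite_prechange_coverage_general
    {𝒳 : Type*} [MeasurableSpace 𝒳]
    (𝒫₀ 𝒫₁ : Set (Measure 𝒳))
    (τ : (ℕ → 𝒳) → ℕ∞) (hτ : IsStoppingTimeSeq τ)
    (That : (ℕ → 𝒳) → ℕ)
    (hThat : ∀ ω, τ ω ≠ ⊤ → 1 ≤ That ω ∧ (That ω : ℕ∞) ≤ τ ω)
    (R S : ℕ → ℕ → (ℕ → 𝒳) → ℝ≥0∞)
    (hR : ∀ t : ℕ, 1 ≤ t → IsForwardEProcess 𝒫₁ t (R t))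
    (hS : ∀ t : ℕ, 1 ≤ t → IsBackwardEProcess 𝒫₀ t (S t))
    (α : ℝ) (hα : α ∈ Set.Ioo (0 : ℝ) 1)
    (T : ℕ) (hT : 1 ≤ T)
    -- Assumption 1: least favorable element of the pre-change class
    (Pinfs : Measure (ℕ → 𝒳))
    (hass1 : ∀ F₀ ∈ 𝒫₀, ∀ t : ℕ, ∀ Pinf : Measure (ℕ → 𝒳), IsNoChangeLaw Pinf F₀ →
      Pinfs {ω | (t : ℕ∞) ≤ τ ω} ≤ Pinf {ω | (t : ℕ∞) ≤ τ ω})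
    -- the auxiliary randomization carrying the estimators `r_t*`, independent of the data
    {Ωa : Type*} [MeasurableSpace Ωa] (μa : Measure Ωa) [IsProbabilityMeasure μa]
    (r : ℕ → Ωa → ℝ) (hrmeas : ∀ t, Measurable (r t))
    (hrpos : ∀ t, ∀ᵐ a ∂μa, 0 < r t a) (hrint : ∀ t, Integrable (r t) μa)
    (hrunb : ∀ t : ℕ, ∫ a, r t a ∂μa = (Pinfs {ω | (t : ℕ∞) ≤ τ ω}).toReal)
    (F₀ : Measure 𝒳) (hF₀ : F₀ ∈ 𝒫₀) (F₁ : Measure 𝒳) (hF₁ : F₁ ∈ 𝒫₁)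
    (Pinf : Measure (ℕ → 𝒳)) (hPinf : IsNoChangeLaw Pinf F₀)
    (hpos : Pinf {ω | (T : ℕ∞) ≤ τ ω} ≠ 0)
    (P : Measure (ℕ → 𝒳)) (hP : IsChangeLaw P F₀ F₁ T) :
    ENNReal.ofReal (1 - α) ≤
      ProbabilityTheory.cond (P.prod μa) {q : (ℕ → 𝒳) × Ωa | (T : ℕ∞) ≤ τ q.1}
        {q : (ℕ → 𝒳) × Ωa |
          T ∈ {t : ℕ | 1 ≤ t ∧ (t : ℕ∞) ≤ τ q.1 ∧
            eStat τ That R S t q.1 < ((2 / (α * r t q.2) : ℝ) : EReal)}} := by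
  have := hP.1
  set B : Set (ℕ → 𝒳) := {ω | (T : ℕ∞) ≤ τ ω}
  have hBσ := hτ.measurableSet_ge hT
  have hPB : P B = Pinf B :=
    hP.isIIDOn_preChange.measure_eq (hPinf.isIIDOn fun _ hi => hi.1) hBσ
  have hBprod : (P.prod μa) {q | (T : ℕ∞) ≤ τ q.1} = P B := by
    change (P.prod μa) (Prod.fst ⁻¹' B) = P B
    rw [← Measure.fst_apply (coordSigma_le _ _ hBσ), Measure.fst_prod]
  rw [ENNReal.ofReal_sub 1 hα.1.le, ENNReal.ofReal_one]
  refine one_sub_le_cond_of_measure_inter_compl_le (measurable_fst (coordSigma_le _ _ hBσ))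
    (hBprod ▸ hPB ▸ hpos) (hBprod ▸ measure_ne_top _ _) ?_
  have hr : Measurable fun a => ENNReal.ofReal (2 / (α * r T a)) := by
    have := hrmeas T
    fun_prop
  calc _ ≤ (P.prod μa) {q | q.1 ∈ crossingSet (R T) (S T) T (ENNReal.ofReal (2 / (α * r T q.2)))} :=
        measure_mono fun q hq => mem_crossingSet_of_le_eStat (fun h => (hThat q.1 h).1)
          (not_lt.1 fun h => hq.2 ⟨hT, hq.1, h⟩)
    _ ≤ ENNReal.ofReal (α * ∫ a, r T a ∂μa) :=
        prod_measure_le_ofReal_mul_integral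
          (hP.measure_crossingSet_le hT (hR T hT) (hS T hT) hF₀ hF₁) hα.1 (hrpos T) (hrint T)
          (measurableSet_setOf_mem_crossingSet (hR T hT) (hS T hT) hr)
    _ ≤ ENNReal.ofReal α * (P.prod μa) {q | (T : ℕ∞) ≤ τ q.1} := by
        rw [ENNReal.ofReal_mul hα.1.le, hrunb, hBprod, hPB]
        gcongr
        exact ENNReal.ofReal_toReal_le.trans (hass1 F₀ hF₀ T Pinf hPinf)

/-- Composite pre-change coverage guarantee: suppose the pre-change class
`𝒫₀` and the stopping time `τ` satisfy Assumption 1 with least favorable element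
`F₀* ∈ 𝒫₀` (i.e. `P_{F₀,∞}(τ ≥ t) ≥ P_{F₀*,∞}(τ ≥ t)` for all `F₀ ∈ 𝒫₀` and `t`), and
`P_{F₀,∞}(τ ≥ T) > 0` for all `F₀ ∈ 𝒫₀`. Then for every `α ∈ (0,1)`, `T`, and post-change
class `𝒫₁`, the confidence set `C = {t ≤ τ : M_t < 2/(α r_t*)}` built from any
data-independent, a.s. strictly positive, unbiased estimators `r_t*` of
`P_{F₀*,∞}(τ ≥ t)` satisfies `P_{F₀,T,F₁}(T ∈ C | τ ≥ T) ≥ 1 − α` for all `F₀ ∈ 𝒫₀`,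
`F₁ ∈ 𝒫₁`. -/
theorem composite_prechange_coverage
    {𝒳 : Type*} [MeasurableSpace 𝒳]
    (𝒫₀ 𝒫₁ : Set (Measure 𝒳)) (hdisj : Disjoint 𝒫₀ 𝒫₁)
    (τ : (ℕ → 𝒳) → ℕ∞) (hτ : IsStoppingTimeSeq τ)
    (That : (ℕ → 𝒳) → ℕ) (hThatMeas : Measurable That)
    (hThat : ∀ ω, τ ω ≠ ⊤ → 1 ≤ That ω ∧ (That ω : ℕ∞) ≤ τ ω)
    (R S : ℕ → ℕ → (ℕ → 𝒳) → ℝ≥0∞)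
    (hR : ∀ t : ℕ, 1 ≤ t → IsForwardEProcess 𝒫₁ t (R t))
    (hS : ∀ t : ℕ, 1 ≤ t → IsBackwardEProcess 𝒫₀ t (S t))
    (α : ℝ) (hα : α ∈ Set.Ioo (0 : ℝ) 1)
    (T : ℕ) (hT : 1 ≤ T)
    -- Assumption 1: least favorable element of the pre-change class
    (F₀s : Measure 𝒳) (hF₀s : F₀s ∈ 𝒫₀)
    (Pinfs : Measure (ℕ → 𝒳)) (hPinfs : IsNoChangeLaw Pinfs F₀s)
    (hass1 : ∀ F₀ ∈ 𝒫₀, ∀ t : ℕ, ∀ Pinf : Measure (ℕ → 𝒳), IsNoChangeLaw Pinf F₀ →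
      Pinfs {ω | (t : ℕ∞) ≤ τ ω} ≤ Pinf {ω | (t : ℕ∞) ≤ τ ω})
    -- the auxiliary randomization carrying the estimators `r_t*`, independent of the data
    {Ωa : Type*} [MeasurableSpace Ωa] (μa : Measure Ωa) [IsProbabilityMeasure μa]
    (r : ℕ → Ωa → ℝ) (hrmeas : ∀ t, Measurable (r t))
    (hrpos : ∀ t, ∀ᵐ a ∂μa, 0 < r t a) (hrint : ∀ t, Integrable (r t) μa)
    (hrunb : ∀ t : ℕ, ∫ a, r t a ∂μa = (Pinfs {ω | (t : ℕ∞) ≤ τ ω}).toReal)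
    (F₀ : Measure 𝒳) (hF₀ : F₀ ∈ 𝒫₀) (F₁ : Measure 𝒳) (hF₁ : F₁ ∈ 𝒫₁)
    (Pinf : Measure (ℕ → 𝒳)) (hPinf : IsNoChangeLaw Pinf F₀)
    (hpos : Pinf {ω | (T : ℕ∞) ≤ τ ω} ≠ 0)
    (P : Measure (ℕ → 𝒳)) (hP : IsChangeLaw P F₀ F₁ T) :
    ENNReal.ofReal (1 - α) ≤
      ProbabilityTheory.cond (P.prod μa) {q : (ℕ → 𝒳) × Ωa | (T : ℕ∞) ≤ τ q.1}
        {q : (ℕ → 𝒳) × Ωa |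
          T ∈ {t : ℕ | 1 ≤ t ∧ (t : ℕ∞) ≤ τ q.1 ∧
            eStat τ That R S t q.1 < ((2 / (α * r t q.2) : ℝ) : EReal)}} :=
  composite_prechange_coverage_general 𝒫₀ 𝒫₁ τ hτ That hThat R S hR hS α hα T hT Pinfs hass1 μa r
    hrmeas hrpos hrint hrunb F₀ hF₀ F₁ hF₁ Pinf hPinf hpos P hP

end SeqChange
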